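/- For nonzero vectors α, β in ℝ² and any index k ∈ {1,2}, one has |⟨α⟩ β_k - α_k ⟨β⟩| ≤ |α| |β| θ(α, β) + |α|/⟨β⟩ + |β|/⟨α⟩, where ⟨α⟩ = (1 + |α|²)^{1/2} and θ(α, β) is the angle between α and β. -/

import Mathlib

open InnerProductGeometry

noncomputable section

/-- Japanese bracket `⟨r⟩ = (1 + r²)^{1/2}`. -/
def jb (r : ℝ) : ℝ := Real.sqrt (1 + r ^ 2)

lemma jb_pos (r : ℝ) : 0 < jb r := Real.sqrt_pos.2 (by positivity)

lemma le_jb (r : ℝ) (hr : 0 ≤ r) : r ≤ jb r := by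
  rw [jb]
  nlinarith [Real.sq_sqrt (show (0:ℝ) ≤ 1 + r ^ 2 by positivity),
    Real.sqrt_nonneg (1 + r ^ 2)]

lemma jb_sub_le (r : ℝ) (hr : 0 ≤ r) : jb r - r ≤ 1 / jb r := by
  have h1 : (jb r - r) * (jb r + r) = 1 := by
    have : jb r ^ 2 = 1 + r ^ 2 := Real.sq_sqrt (by positivity)
    nlinarith
  have h2 : 0 < jb r := jb_pos r
  rw [le_div_iff₀ h2]
  nlinarith [le_jb r hr]

lemma coord_le_norm (x : EuclideanSpace ℝ (Fin 2)) (k : Fin 2) : |x k| ≤ ‖x‖ := by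
  have := abs_real_inner_le_norm (EuclideanSpace.single k (1:ℝ)) x
  simpa [EuclideanSpace.inner_single_left] using this

/-- For nonzero `α, β ∈ ℝ²` and any index `k ∈ {1,2}`,
`|⟨α⟩ β_k - α_k ⟨β⟩| ≤ |α| |β| θ(α, β) + |α|/⟨β⟩ + |β|/⟨α⟩`. -/
theorem bracket_symbol_le
    (α β : EuclideanSpace ℝ (Fin 2)) (hα : α ≠ 0) (hβ : β ≠ 0) (k : Fin 2) :
    |jb ‖α‖ * β k - α k * jb ‖β‖| ≤
      ‖α‖ * ‖β‖ * angle α β + ‖α‖ / jb ‖β‖ + ‖β‖ / jb ‖α‖ := by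
  set a := ‖α‖ with ha
  set b := ‖β‖ with hb
  have ha0 : 0 < a := norm_pos_iff.2 hα
  have hb0 : 0 < b := norm_pos_iff.2 hβ
  set θ := angle α β with hθ
  have hθ0 : 0 ≤ θ := angle_nonneg α β
  -- Step A : ‖a•β - b•α‖ ≤ a*b*θ
  have hinner : (inner ℝ α β : ℝ) = Real.cos θ * (a * b) := (cos_angle_mul_norm_mul_norm α β).symm
  have hsq : ‖a • β - b • α‖ ^ 2 = 2 * a^2 * b^2 * (1 - Real.cos θ) := by
    have hinner2 : (inner ℝ β α : ℝ) = Real.cos θ * (a * b) := by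
      rw [real_inner_comm]; exact hinner
    rw [norm_sub_sq_real, norm_smul, norm_smul, real_inner_smul_left,
      real_inner_smul_right, hinner2]
    simp only [Real.norm_eq_abs, abs_of_pos ha0, abs_of_pos hb0]
    ring
  have hcos : 1 - Real.cos θ = 2 * Real.sin (θ/2) ^ 2 := by
    have h1 := Real.cos_sq (θ/2)
    rw [show 2*(θ/2) = θ by ring] at h1
    have h2 := Real.sin_sq_add_cos_sq (θ/2)
    nlinarith
  have hsin : Real.sin (θ/2) ≤ θ/2 := Real.sin_le (by linarith)
  have hsin0 : 0 ≤ Real.sin (θ/2) := Real.sin_nonneg_of_nonneg_of_le_pi (by linarith)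
    (by linarith [angle_le_pi α β, Real.pi_pos])
  have hsinsq : Real.sin (θ/2) ^ 2 ≤ (θ/2) ^ 2 := by nlinarith
  have hA : ‖a • β - b • α‖ ≤ a * b * θ := by
    have h1 : ‖a • β - b • α‖ ^ 2 ≤ (a * b * θ)^2 := by
      rw [hsq, hcos]
      nlinarith [mul_le_mul_of_nonneg_left hsinsq
        (show (0:ℝ) ≤ 4 * a^2 * b^2 by positivity)]
    have h2 := Real.sqrt_le_sqrt h1
    rwa [Real.sqrt_sq (norm_nonneg _), Real.sqrt_sq (by positivity)] at h2
  -- coordinate bound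
  have hAk : |a * β k - b * α k| ≤ a * b * θ := by
    have h := coord_le_norm (a • β - b • α) k
    have : (a • β - b • α) k = a * β k - b * α k := by
      simp [PiLp.sub_apply, PiLp.smul_apply]
    rw [this] at h
    exact h.trans hA
  -- decomposition
  have hbk : |β k| ≤ b := coord_le_norm β k
  have hak : |α k| ≤ a := coord_le_norm α k
  have hja : jb a - a ≤ 1 / jb a := jb_sub_le a ha0.le
  have hjb : jb b - b ≤ 1 / jb b := jb_sub_le b hb0.le
  have hja0 : 0 ≤ jb a - a := by linarith [le_jb a ha0.le]
  have hjb0 : 0 ≤ jb b - b := by linarith [le_jb b hb0.le]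
  have key : jb a * β k - α k * jb b =
      (jb a - a) * β k + (a * β k - b * α k) + α k * (b - jb b) := by ring
  rw [key]
  have t1 : |(jb a - a) * β k| ≤ (1 / jb a) * b := by
    rw [abs_mul, abs_of_nonneg hja0]
    exact mul_le_mul hja hbk (abs_nonneg _) (one_div_nonneg.2 (jb_pos a).le)
  have t2 : |α k * (b - jb b)| ≤ a * (1 / jb b) := by
    rw [abs_mul, abs_sub_comm, abs_of_nonneg hjb0]
    exact mul_le_mul hak hjb hjb0 ha0.le
  calc |(jb a - a) * β k + (a * β k - b * α k) + α k * (b - jb b)|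
      ≤ |(jb a - a) * β k| + |a * β k - b * α k| + |α k * (b - jb b)| := by
        exact (abs_add_le _ _).trans (by gcongr; exact abs_add_le _ _)
    _ ≤ (1/jb a) * b + a * b * θ + a * (1/jb b) := add_le_add (add_le_add t1 hAk) t2
    _ = a * b * θ + a / jb b + b / jb a := by ring
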